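/- Let Λ and Λ' be finite nonempty index sets, b : Λ → ℕ, c : Λ → ℕ with c(λ) ≥ 1, b' : Λ' → ℕ, c' : Λ' → ℕ with c'(λ') ≥ 1. Let F = ⊕_{λ∈Λ} χ_{[b(λ), b(λ)+c(λ))} and G = ⊕_{λ'∈Λ'} χ_{[b'(λ'), b'(λ')+c'(λ'))}, and set l+1 = max_λ c(λ) and l'+1 = max_{λ'} c'(λ'). Assume that neither family consists of a single bar equal to [0,1) (i.e., it is not the case that Λ is a singleton {λ} with b(λ)=0, c(λ)=1, and likewise for Λ'). Then d_I(F, G) ≥ |l − l'|/2. (This is the algebraic content of the lower bound of the cohomology interleaving distance between spaces over BS¹ by half the difference of their cup-lengths.) -/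

import Mathlib

open scoped ENNReal

/-- A persistence module: a functor from the poset `(ℝ, ≤)` to `K`-vector spaces,
presented by its structure maps. -/
structure PersistenceModule (K : Type) [Field K] where
  X : ℝ → Type
  [addCommGroupX : ∀ a, AddCommGroup (X a)]
  [moduleX : ∀ a, Module K (X a)]
  map : ∀ {a b : ℝ}, a ≤ b → (X a →ₗ[K] X b)
  map_refl : ∀ a : ℝ, map (le_refl a) = LinearMap.id
  map_trans : ∀ {a b c : ℝ} (hab : a ≤ b) (hbc : b ≤ c),
      map (hab.trans hbc) = (map hbc).comp (map hab)

attribute [instance] PersistenceModule.addCommGroupX PersistenceModule.moduleX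

/-- The pair `(φ, ψ)` is an `ε`-interleaving between the persistence modules `F` and `G`:
both are natural transformations (to the `ε`-shifts) and the two triangle identities hold. -/
structure IsInterleaving (K : Type) [Field K] (ε : ℝ) (F G : PersistenceModule K)
    (φ : ∀ a : ℝ, F.X a →ₗ[K] G.X (a + ε))
    (ψ : ∀ a : ℝ, G.X a →ₗ[K] F.X (a + ε)) : Prop where
  nonneg : 0 ≤ ε
  φ_nat : ∀ {a b : ℝ} (hab : a ≤ b),
      (φ b).comp (F.map hab) = (G.map (add_le_add hab le_rfl)).comp (φ a)
  ψ_nat : ∀ {a b : ℝ} (hab : a ≤ b),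
      (ψ b).comp (G.map hab) = (F.map (add_le_add hab le_rfl)).comp (ψ a)
  tri₁ : ∀ (a : ℝ) (h : a ≤ a + ε + ε), (ψ (a + ε)).comp (φ a) = F.map h
  tri₂ : ∀ (a : ℝ) (h : a ≤ a + ε + ε), (φ (a + ε)).comp (ψ a) = G.map h

/-- `F` and `G` are `ε`-interleaved. -/
def Interleaved (K : Type) [Field K] (ε : ℝ) (F G : PersistenceModule K) : Prop :=
  ∃ φ ψ, IsInterleaving K ε F G φ ψ

/-- The interleaving distance `d_I(F, G) ∈ [0, ∞]`: the infimum of the set of `ε ≥ 0` such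
that `F` and `G` are `ε`-interleaved (`∞` when this set is empty). -/
noncomputable def interleavingDist (K : Type) [Field K] (F G : PersistenceModule K) : ℝ≥0∞ :=
  sInf {x : ℝ≥0∞ | ∃ ε : ℝ, 0 ≤ ε ∧ Interleaved K ε F G ∧ x = ENNReal.ofReal ε}

attribute [local instance] Classical.propDecidable

lemma subsingleton_ite_bot (K : Type) [Field K] {J : Set ℝ} {a : ℝ} (ha : a ∉ J) :
    Subsingleton ↥(if a ∈ J then (⊤ : Submodule K K) else ⊥) := by
  rw [if_neg ha]
  infer_instance

/-- The interval module `χ_J` associated with an interval `J ⊆ ℝ`: the vector space `K`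
at points of `J` (realized as `⊤ ≤ K`), and `0` elsewhere, with identity/zero structure maps. -/
noncomputable def intervalModule (K : Type) [Field K] (J : Set ℝ) (hJ : J.OrdConnected) :
    PersistenceModule K where
  X a := ↥(if a ∈ J then (⊤ : Submodule K K) else ⊥)
  map {a b} hab :=
    if h : a ∈ J ∧ b ∈ J then
      Submodule.inclusion (le_of_eq (by rw [if_pos h.1, if_pos h.2]))
    else 0
  map_refl a := by
    try dsimp only
    by_cases ha : a ∈ J
    · rw [dif_pos ⟨ha, ha⟩]
      rfl
    · rw [dif_neg (fun h => ha h.1)]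
      haveI := subsingleton_ite_bot K (J := J) ha
      exact LinearMap.ext fun x => Subsingleton.elim _ _
  map_trans := by
    intro a b c hab hbc
    try dsimp only
    by_cases hac : a ∈ J ∧ c ∈ J
    · have hb : b ∈ J := hJ.out hac.1 hac.2 ⟨hab, hbc⟩
      rw [dif_pos hac, dif_pos ⟨hb, hac.2⟩, dif_pos ⟨hac.1, hb⟩]
      rfl
    · rw [dif_neg hac]
      rcases not_and_or.mp hac with ha | hc
      · haveI := subsingleton_ite_bot K (J := J) ha
        exact LinearMap.ext fun x => by
          rw [Subsingleton.elim x 0]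
          simp
      · haveI := subsingleton_ite_bot K (J := J) hc
        exact LinearMap.ext fun x => Subsingleton.elim _ _

/-- The interval module `χ_{[a,b)}`. -/
noncomputable def chiIco (K : Type) [Field K] (a b : ℝ) : PersistenceModule K :=
  intervalModule K (Set.Ico a b) Set.ordConnected_Ico

/-- The interval module `χ_{[a,∞)}`. -/
noncomputable def chiIci (K : Type) [Field K] (a : ℝ) : PersistenceModule K :=
  intervalModule K (Set.Ici a) Set.ordConnected_Ici

/-- The zero persistence module `χ_∅`. -/
noncomputable def zeroPM (K : Type) [Field K] : PersistenceModule K :=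
  intervalModule K (∅ : Set ℝ) Set.ordConnected_empty

/-- The pointwise direct sum of a family of persistence modules. -/
noncomputable def dsum (K : Type) [Field K] {ι : Type} (F : ι → PersistenceModule K) :
    PersistenceModule K where
  X a := Π₀ i, (F i).X a
  map {a b} hab := DFinsupp.mapRange.linearMap fun i => (F i).map hab
  map_refl a := by
    try dsimp only
    have : (fun i => (F i).map (le_refl a))
        = fun i => (LinearMap.id : (F i).X a →ₗ[K] (F i).X a) :=
      funext fun i => (F i).map_refl a
    rw [this]
    exact DFinsupp.mapRange.linearMap_id
  map_trans {a b c} hab hbc := by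
    try dsimp only
    have : (fun i => (F i).map (hab.trans hbc)) =
        fun i => ((F i).map hbc).comp ((F i).map hab) :=
      funext fun i => (F i).map_trans hab hbc
    rw [this]
    exact DFinsupp.mapRange.linearMap_comp _ _

section AuxLemmas

variable (K : Type) [Field K]

/-- The canonical nonzero element of an interval module at a point of the interval. -/
noncomputable def elemOf (J : Set ℝ) (hJ : J.OrdConnected) {x : ℝ} (hx : x ∈ J) :
    (intervalModule K J hJ).X x :=
  ⟨(1 : K), by
    show (1 : K) ∈ (if x ∈ J then (⊤ : Submodule K K) else ⊥)
    rw [if_pos hx]; exact Submodule.mem_top⟩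

lemma elemOf_ne_zero (J : Set ℝ) (hJ : J.OrdConnected) {x : ℝ} (hx : x ∈ J) :
    elemOf K J hJ hx ≠ 0 := by
  intro h
  exact one_ne_zero (congrArg Subtype.val h)

lemma intervalModule_map_elemOf (J : Set ℝ) (hJ : J.OrdConnected) {x y : ℝ} (hxy : x ≤ y)
    (hx : x ∈ J) (hy : y ∈ J) :
    (intervalModule K J hJ).map hxy (elemOf K J hJ hx) = elemOf K J hJ hy := by
  show (if h : x ∈ J ∧ y ∈ J then Submodule.inclusion _ else 0) (elemOf K J hJ hx)
      = elemOf K J hJ hy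
  rw [dif_pos ⟨hx, hy⟩]
  rfl

lemma intervalModule_map_eq_zero (J : Set ℝ) (hJ : J.OrdConnected) {x y : ℝ} (hxy : x ≤ y)
    (hn : ¬ (x ∈ J ∧ y ∈ J)) (v : (intervalModule K J hJ).X x) :
    (intervalModule K J hJ).map hxy v = 0 := by
  show (if h : x ∈ J ∧ y ∈ J then Submodule.inclusion _ else 0) v = 0
  rw [dif_neg hn]
  rfl

lemma dsum_map_single_ne_zero {ι : Type} [DecidableEq ι] (F : ι → PersistenceModule K)
    {x y : ℝ} (hxy : x ≤ y) (i : ι) (w : (F i).X x) (hw : (F i).map hxy w ≠ 0) :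
    (dsum K F).map hxy (DFinsupp.single i w) ≠ 0 := by
  intro h0
  have h1 : DFinsupp.mapRange.linearMap (fun i => (F i).map hxy)
      (DFinsupp.single i w) = 0 := h0
  rw [DFinsupp.mapRange.linearMap_apply, DFinsupp.mapRange_single] at h1
  simp only [DFinsupp.single_eq_zero] at h1
  exact hw h1

lemma dsum_map_exists_ne_zero {ι : Type} (F : ι → PersistenceModule K)
    {x y : ℝ} (hxy : x ≤ y) (w : Π₀ i, (F i).X x)
    (h : (dsum K F).map hxy w ≠ 0) : ∃ j, (F j).map hxy (w j) ≠ 0 := by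
  by_contra hc
  push_neg at hc
  apply h
  show DFinsupp.mapRange.linearMap (fun i => (F i).map hxy) w = 0
  rw [DFinsupp.mapRange.linearMap_apply]
  exact DFinsupp.ext fun j => by rw [DFinsupp.mapRange_apply]; exact hc j

/-- Interleavings are symmetric. -/
lemma Interleaved.symm {ε : ℝ} {F G : PersistenceModule K}
    (h : Interleaved K ε F G) : Interleaved K ε G F := by
  obtain ⟨φ, ψ, h⟩ := h
  exact ⟨ψ, φ, ⟨h.nonneg, h.ψ_nat, h.φ_nat, h.tri₂, h.tri₁⟩⟩

/-- Core estimate: if the two direct sums of interval modules are `ε`-interleaved,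
then any bar length on the left is at most the max bar length on the right plus `2ε`. -/
lemma core_estimate {Λ Λ' : Type} (b c : Λ → ℕ) (b' c' : Λ' → ℕ)
    (i0 : Λ) (L' : ℕ) (hub : ∀ j, c' j ≤ L') {ε : ℝ}
    (h : Interleaved K ε
      (dsum K fun x => chiIco K (b x : ℝ) ((b x : ℝ) + (c x : ℝ)))
      (dsum K fun x => chiIco K (b' x : ℝ) ((b' x : ℝ) + (c' x : ℝ)))) :
    (c i0 : ℝ) ≤ (L' : ℝ) + 2 * ε := by
  classical
  obtain ⟨φ, ψ, h⟩ := h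
  have hε : 0 ≤ ε := h.nonneg
  by_contra hlt
  push_neg at hlt
  have ht0 : (0 : ℝ) ≤ (L' : ℝ) := Nat.cast_nonneg _
  set a : ℝ := (b i0 : ℝ) with ha
  set t : ℝ := (L' : ℝ) with ht
  -- memberships of the long bar
  have hmem_a : a ∈ Set.Ico (b i0 : ℝ) ((b i0 : ℝ) + (c i0 : ℝ)) :=
    ⟨le_refl _, by linarith⟩
  have hmem_top : a + ε + t + ε ∈ Set.Ico (b i0 : ℝ) ((b i0 : ℝ) + (c i0 : ℝ)) :=
    ⟨by linarith, by linarith⟩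
  set v := elemOf K (Set.Ico (b i0 : ℝ) ((b i0 : ℝ) + (c i0 : ℝ))) Set.ordConnected_Ico hmem_a
    with hv
  set e := DFinsupp.single (β := fun x => (chiIco K (b x : ℝ) ((b x : ℝ) + (c x : ℝ))).X a)
    i0 v with he
  have h1 : a + ε ≤ a + ε + t := by linarith
  have h24 : a ≤ a + ε + ε := by linarith
  have hfull : a ≤ a + ε + t + ε := by linarith
  have key : ψ (a + ε + t)
      ((dsum K fun x => chiIco K (b' x : ℝ) ((b' x : ℝ) + (c' x : ℝ))).map h1 (φ a e)) =
      (dsum K fun x => chiIco K (b x : ℝ) ((b x : ℝ) + (c x : ℝ))).map hfull e := by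
    have n1 := DFunLike.congr_fun (h.ψ_nat h1) (φ a e)
    have n2 := DFunLike.congr_fun (h.tri₁ a h24) e
    have n3 := DFunLike.congr_fun
      ((dsum K fun x => chiIco K (b x : ℝ) ((b x : ℝ) + (c x : ℝ))).map_trans h24
        (add_le_add h1 le_rfl)) e
    simp only [LinearMap.comp_apply, LinearMap.coe_comp, Function.comp_apply] at n1
    rw [n1]
    rw [show (ψ (a + ε)) ((φ a) e) =
      (dsum K fun x => chiIco K (b x : ℝ) ((b x : ℝ) + (c x : ℝ))).map h24 e from n2]
    exact n3.symm
  -- the full structure map of e is nonzero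
  have hne : (dsum K fun x => chiIco K (b x : ℝ) ((b x : ℝ) + (c x : ℝ))).map hfull e ≠ 0 := by
    refine dsum_map_single_ne_zero K
      (fun x => chiIco K (b x : ℝ) ((b x : ℝ) + (c x : ℝ))) hfull i0 v ?_
    have heq := intervalModule_map_elemOf K
      (Set.Ico (b i0 : ℝ) ((b i0 : ℝ) + (c i0 : ℝ))) Set.ordConnected_Ico hfull
      hmem_a hmem_top
    show (intervalModule K (Set.Ico (b i0 : ℝ) ((b i0 : ℝ) + (c i0 : ℝ)))
      Set.ordConnected_Ico).map hfull
      (elemOf K (Set.Ico (b i0 : ℝ) ((b i0 : ℝ) + (c i0 : ℝ))) Set.ordConnected_Ico hmem_a) ≠ 0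
    rw [heq]
    exact elemOf_ne_zero K _ _ hmem_top
  -- hence the middle element is nonzero
  have hgne : (dsum K fun x => chiIco K (b' x : ℝ) ((b' x : ℝ) + (c' x : ℝ))).map h1 (φ a e)
      ≠ 0 := by
    intro h0
    rw [h0, map_zero] at key
    exact hne key.symm
  obtain ⟨j, hj⟩ := dsum_map_exists_ne_zero K
    (fun x => chiIco K (b' x : ℝ) ((b' x : ℝ) + (c' x : ℝ))) h1 (φ a e) hgne
  -- both endpoints lie in the bar j
  have hboth : (a + ε) ∈ Set.Ico (b' j : ℝ) ((b' j : ℝ) + (c' j : ℝ)) ∧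
      (a + ε + t) ∈ Set.Ico (b' j : ℝ) ((b' j : ℝ) + (c' j : ℝ)) := by
    by_contra hcon
    exact hj (intervalModule_map_eq_zero K _ Set.ordConnected_Ico h1 hcon _)
  have hb1 : (b' j : ℝ) ≤ a + ε := hboth.1.1
  have hb2 : a + ε + t < (b' j : ℝ) + (c' j : ℝ) := hboth.2.2
  have hcj : (c' j : ℝ) ≤ (L' : ℝ) := by exact_mod_cast hub j
  linarith

end AuxLemmas

/-- for two finite nonempty direct sums of interval modules with integral
endpoints, maximal bar lengths `l+1` and `l'+1`, if neither family is a single bar `[0,1)`,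
then the interleaving distance is at least `|l - l'|/2`. -/
theorem interleavingDist_ge_half_diff {K : Type} [Field K] {Λ Λ' : Type}
    [Fintype Λ] [Nonempty Λ] [Fintype Λ'] [Nonempty Λ']
    (b c : Λ → ℕ) (hc : ∀ x, 1 ≤ c x) (b' c' : Λ' → ℕ) (hc' : ∀ x, 1 ≤ c' x)
    (l l' : ℕ) (hl : l + 1 = Finset.univ.sup c) (hl' : l' + 1 = Finset.univ.sup c')
    (hΛ : ¬ ((∀ x y : Λ, x = y) ∧ ∀ x, b x = 0 ∧ c x = 1))
    (hΛ' : ¬ ((∀ x y : Λ', x = y) ∧ ∀ x, b' x = 0 ∧ c' x = 1)) :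
    ENNReal.ofReal (|(l : ℝ) - (l' : ℝ)| / 2) ≤
      interleavingDist K (dsum K fun x => chiIco K (b x : ℝ) ((b x : ℝ) + (c x : ℝ)))
        (dsum K fun x => chiIco K (b' x : ℝ) ((b' x : ℝ) + (c' x : ℝ))) := by
  classical
  apply le_sInf
  rintro x ⟨ε, hε0, hI, rfl⟩
  apply ENNReal.ofReal_le_ofReal
  obtain ⟨i0, -, hi0⟩ := Finset.exists_mem_eq_sup Finset.univ Finset.univ_nonempty c
  obtain ⟨i0', -, hi0'⟩ := Finset.exists_mem_eq_sup Finset.univ Finset.univ_nonempty c'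
  have hub' : ∀ j, c' j ≤ l' + 1 := fun j => hl' ▸ Finset.le_sup (Finset.mem_univ j)
  have hub : ∀ j, c j ≤ l + 1 := fun j => hl ▸ Finset.le_sup (Finset.mem_univ j)
  have h1 : (c i0 : ℝ) ≤ ((l' + 1 : ℕ) : ℝ) + 2 * ε :=
    core_estimate K b c b' c' i0 (l' + 1) hub' hI
  have h2 : (c' i0' : ℝ) ≤ ((l + 1 : ℕ) : ℝ) + 2 * ε :=
    core_estimate K b' c' b c i0' (l + 1) hub hI.symm
  have hc1 : (c i0 : ℝ) = (l : ℝ) + 1 := by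
    have : c i0 = l + 1 := by rw [hl, hi0]
    rw [this]; push_cast; ring
  have hc2 : (c' i0' : ℝ) = (l' : ℝ) + 1 := by
    have : c' i0' = l' + 1 := by rw [hl', hi0']
    rw [this]; push_cast; ring
  rw [hc1] at h1
  rw [hc2] at h2
  push_cast at h1 h2
  rw [div_le_iff₀ (by norm_num : (0:ℝ) < 2), abs_sub_le_iff]
  constructor <;> linarith
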